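/- Let (K, t, c, λ) be a weak mixed distributive law in Cat, with splitting (a, π, σ) of the canonical idempotent on tc, and set η₁ = π ∘ (η ▷ c) : c ⟶ a. Then γ ∘ η₁ = (c ◁ η₁) ∘ δ, where γ = (c π) ∘ (λ c) ∘ (t δ) ∘ σ is the canonical coaction (second diagram of the key Lemma of Böhm–Lack–Street). -/

import Mathlib

/-!
Write `Θ = ε_{tc} ∘ λ_c ∘ tδ` (`idem`) and `κ = λ_c ∘ tδ : tc ⟶ ctc` (`coaction`), so that
`Θ = ε ∘ κ` and `γ = cπ ∘ κ ∘ σ`. Two identities drive the proof. First, `κ ∘ Θ = κ`: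
moving `ε` past `κ` and using coassociativity and the compatibility of `λ` with `δ` turns
`κ ∘ Θ` into `εc ∘ δt ∘ κ`. Second, the weak unit axiom gives `κ ∘ ηc = c(Θ ∘ ηc) ∘ δ`.
Since `σ ∘ π = Θ` and `π ∘ Θ = π`, we get
`γ ∘ η₁ = cπ ∘ κ ∘ Θ ∘ ηc = cπ ∘ κ ∘ ηc = c(π ∘ Θ ∘ ηc) ∘ δ = cη₁ ∘ δ`.
-/

open CategoryTheory

universe v₁ u₁ v₂ u₂

variable {K : Type u₁} [Category.{v₁} K]

/-- A weak mixed distributive law `λ : tc ⟶ ct` between a monad `t` and a comonad `c`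
on a category `K`, satisfying the four axioms of Böhm–Lack–Street, stated componentwise. -/
structure WeakMixedDistLaw (t : CategoryTheory.Monad K) (c : CategoryTheory.Comonad K) where
  l : (c.toFunctor ⋙ t.toFunctor) ⟶ (t.toFunctor ⋙ c.toFunctor)
  mul_compat : ∀ X : K, t.μ.app (c.obj X) ≫ l.app X =
    t.map (l.app X) ≫ l.app (t.obj X) ≫ c.map (t.μ.app X)
  comul_compat : ∀ X : K, t.map (c.δ.app X) ≫ l.app (c.obj X) ≫ c.map (l.app X) =
    l.app X ≫ c.δ.app (t.obj X)
  weak_unit : ∀ X : K, t.η.app (c.obj X) ≫ l.app X =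
    c.δ.app X ≫ c.map (t.η.app (c.obj X)) ≫ c.map (l.app X) ≫ c.map (c.ε.app (t.obj X))
  weak_counit : ∀ X : K, l.app X ≫ c.ε.app (t.obj X) =
    t.map (t.η.app (c.obj X)) ≫ t.map (l.app X) ≫ t.map (c.ε.app (t.obj X)) ≫ t.μ.app X

theorem idem_comp_retraction {C : Type u₂} [Category.{v₂} C] {X Y : C} {p : X ⟶ Y} {s : Y ⟶ X}
    {e : X ⟶ X} (hsp : s ≫ p = 𝟙 Y) (he : p ≫ s = e) : e ≫ p = p := by
  rw [← he, Category.assoc, hsp, Category.comp_id]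

namespace WeakMixedDistLaw

variable {t : Monad K} {c : Comonad K} (W : WeakMixedDistLaw t c)

def coaction (X : K) : t.obj (c.obj X) ⟶ c.obj (t.obj (c.obj X)) :=
  t.map (c.δ.app X) ≫ W.l.app (c.obj X)

def idem (X : K) : t.obj (c.obj X) ⟶ t.obj (c.obj X) :=
  W.coaction X ≫ c.ε.app (t.obj (c.obj X))

theorem coaction_comp_comul (X : K) :
    W.coaction X ≫ c.map (W.coaction X) = W.coaction X ≫ c.δ.app (t.obj (c.obj X)) := by
  have hnat : W.l.app (c.obj X) ≫ c.map (t.map (c.δ.app X)) =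
      t.map (c.map (c.δ.app X)) ≫ W.l.app (c.obj (c.obj X)) :=
    (W.l.naturality (c.δ.app X)).symm
  have hcoassoc : t.map (c.δ.app X) ≫ t.map (c.map (c.δ.app X)) =
      t.map (c.δ.app X) ≫ t.map (c.δ.app (c.obj X)) := by
    rw [← t.map_comp, ← t.map_comp, c.coassoc]
  simp only [coaction, Functor.map_comp, Category.assoc]
  rw [reassoc_of% hnat, reassoc_of% hcoassoc, W.comul_compat]

theorem idem_comp_coaction (X : K) : W.idem X ≫ W.coaction X = W.coaction X := by
  have hε : c.ε.app (t.obj (c.obj X)) ≫ W.coaction X =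
      c.map (W.coaction X) ≫ c.ε.app (c.obj (t.obj (c.obj X))) :=
    (c.ε.naturality (W.coaction X)).symm
  rw [idem, Category.assoc, hε, reassoc_of% W.coaction_comp_comul, Comonad.left_counit,
    Category.comp_id]

theorem unit_comp_coaction (X : K) :
    t.η.app (c.obj X) ≫ W.coaction X = c.δ.app X ≫ c.map (t.η.app (c.obj X) ≫ W.idem X) := by
  have hη : t.η.app (c.obj X) ≫ t.map (c.δ.app X) = c.δ.app X ≫ t.η.app (c.obj (c.obj X)) :=
    (t.η.naturality (c.δ.app X)).symm
  have hcη : c.map (t.η.app (c.obj X)) ≫ c.map (t.map (c.δ.app X)) =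
      c.map (c.δ.app X) ≫ c.map (t.η.app (c.obj (c.obj X))) := by
    rw [← c.map_comp, hη, c.map_comp]
  simp only [coaction, idem, Functor.map_comp, Category.assoc]
  rw [reassoc_of% hη, W.weak_unit, reassoc_of% hcη, reassoc_of% c.coassoc]

end WeakMixedDistLaw

/-- Second diagram of the key Lemma: γ ∘ η₁ = (c η₁) ∘ δ, where η₁ = π ∘ (η c). -/
theorem eta_one_colinear (t : CategoryTheory.Monad K) (c : CategoryTheory.Comonad K)
    (W : WeakMixedDistLaw t c) (a : K ⥤ K) (π : (c.toFunctor ⋙ t.toFunctor) ⟶ a) (σ : a ⟶ (c.toFunctor ⋙ t.toFunctor))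
    (hsec : σ ≫ π = 𝟙 a)
    (hsplit : ∀ X : K, π.app X ≫ σ.app X =
      t.map (c.δ.app X) ≫ W.l.app (c.obj X) ≫ c.ε.app (t.obj (c.obj X))) :
    ∀ X : K,
      (t.η.app (c.obj X) ≫ π.app X) ≫
        (σ.app X ≫ t.map (c.δ.app X) ≫ W.l.app (c.obj X) ≫ c.map (π.app X)) =
      c.δ.app X ≫ c.map (t.η.app (c.obj X) ≫ π.app X) := by
  intro X
  have hΘ : π.app X ≫ σ.app X = W.idem X := by
    rw [hsplit X, WeakMixedDistLaw.idem, WeakMixedDistLaw.coaction, Category.assoc]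
  have hΘπ : W.idem X ≫ π.app X = π.app X :=
    idem_comp_retraction (by simpa using NatTrans.congr_app hsec X) hΘ
  calc (t.η.app (c.obj X) ≫ π.app X) ≫
        (σ.app X ≫ t.map (c.δ.app X) ≫ W.l.app (c.obj X) ≫ c.map (π.app X))
      = t.η.app (c.obj X) ≫ (W.idem X ≫ W.coaction X) ≫ c.map (π.app X) := by
        rw [← hΘ]; simp only [WeakMixedDistLaw.coaction, Category.assoc]
    _ = c.δ.app X ≫ c.map (t.η.app (c.obj X) ≫ W.idem X ≫ π.app X) := by
        rw [W.idem_comp_coaction, reassoc_of% W.unit_comp_coaction]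
        simp only [Functor.map_comp, Category.assoc]
    _ = c.δ.app X ≫ c.map (t.η.app (c.obj X) ≫ π.app X) := by rw [hΘπ]
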